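/- arXiv:math/0207283 — 2 statements merged into one kernel-verified Lean document; each statement's English description precedes it below -/
import Mathlib

section
/- In the tensor product of two abstract crystals with Kashiwara operators given by the tensor product rule, the relation f̃_i(b₁⊗b₂) = b' if and only if b₁⊗b₂ = ẽ_i b' holds; i.e., the tensor product of two crystals is again a crystal. -/
/-- The data of an abstract crystal: weight map, string lengths `ε_i, φ_i`,
and Kashiwara operators `ẽ_i, f̃_i` (with `none` playing the role of `0`). -/
structure CrystalData (I P B : Type*) where
  wt : B → P
  eps : I → B → ℤ
  phi : I → B → ℤ
  e : I → B → Option B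
  f : I → B → Option B

/-- The abstract crystal axioms for a `CrystalData`, with respect to simple roots `α`
and the pairing `⟨h_i, ·⟩`. -/
def IsCrystal {I P B : Type*} [AddCommGroup P] (α : I → P) (pair : I → P → ℤ)
    (C : CrystalData I P B) : Prop :=
  (∀ i b, C.phi i b = C.eps i b + pair i (C.wt b)) ∧
  (∀ i b b', C.e i b = some b' →
    C.wt b' = C.wt b + α i ∧ C.eps i b' = C.eps i b - 1 ∧ C.phi i b' = C.phi i b + 1) ∧
  (∀ i b b', C.f i b = some b' →
    C.wt b' = C.wt b - α i ∧ C.eps i b' = C.eps i b + 1 ∧ C.phi i b' = C.phi i b - 1) ∧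
  (∀ i b b', C.f i b = some b' ↔ C.e i b' = some b)

/-- The tensor product of two abstract crystals, with the Kashiwara operators given by
the tensor product rule. The first factor is the left factor `b₁`. -/
def CrystalData.tensor {I P B1 B2 : Type*} [AddCommGroup P] (pair : I → P → ℤ)
    (C1 : CrystalData I P B1) (C2 : CrystalData I P B2) : CrystalData I P (B1 × B2) where
  wt := fun x => C1.wt x.1 + C2.wt x.2
  eps := fun i x => max (C1.eps i x.1) (C2.eps i x.2 - pair i (C1.wt x.1))
  phi := fun i x => max (C2.phi i x.2) (C1.phi i x.1 + pair i (C2.wt x.2))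
  e := fun i x =>
    if C2.eps i x.2 ≤ C1.phi i x.1 then (C1.e i x.1).map (fun y => (y, x.2))
    else (C2.e i x.2).map (fun y => (x.1, y))
  f := fun i x =>
    if C2.eps i x.2 < C1.phi i x.1 then (C1.f i x.1).map (fun y => (y, x.2))
    else (C2.f i x.2).map (fun y => (x.1, y))

/-- the tensor product of two abstract crystals, with the Kashiwara operators
given by the tensor product rule, is again an abstract crystal; in particular
`f̃_i(b₁⊗b₂) = b'` if and only if `b₁⊗b₂ = ẽ_i b'`. -/
theorem tensor_isCrystal {I P B1 B2 : Type*} [AddCommGroup P]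
    (α : I → P) (pair : I → P → ℤ)
    (C1 : CrystalData I P B1) (C2 : CrystalData I P B2)
    (h1 : IsCrystal α pair C1) (h2 : IsCrystal α pair C2)
    (hadd : ∀ i p q, pair i (p + q) = pair i p + pair i q) :
    IsCrystal α pair (CrystalData.tensor pair C1 C2) := by
  obtain ⟨h1p, h1e, h1f, h1ef⟩ := h1
  obtain ⟨h2p, h2e, h2f, h2ef⟩ := h2
  have pα1 : ∀ i b b', C1.e i b = some b' → pair i (α i) = 2 := by
    intro i b b' h
    obtain ⟨hw, he, hp⟩ := h1e i b b' h
    have t1 := h1p i b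
    have t2 := h1p i b'
    rw [hw, hadd] at t2
    omega
  have pα2 : ∀ i b b', C2.e i b = some b' → pair i (α i) = 2 := by
    intro i b b' h
    obtain ⟨hw, he, hp⟩ := h2e i b b' h
    have t1 := h2p i b
    have t2 := h2p i b'
    rw [hw, hadd] at t2
    omega
  have hneg : ∀ i p, pair i (-p) = - pair i p := by
    intro i p
    have h0 : pair i 0 = 0 := by
      have := hadd i 0 0
      simpa using this
    have := hadd i p (-p)
    rw [add_neg_cancel, h0] at this
    omega
  refine ⟨?_, ?_, ?_, ?_⟩
  · intro i x
    simp only [CrystalData.tensor, hadd]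
    have t1 := h1p i x.1
    have t2 := h2p i x.2
    omega
  · intro i x b' h
    simp only [CrystalData.tensor] at h ⊢
    have t1 := h1p i x.1
    have t2 := h2p i x.2
    split_ifs at h with hc
    · rw [Option.map_eq_some_iff] at h
      obtain ⟨y, hy, rfl⟩ := h
      obtain ⟨hw, he, hp⟩ := h1e i x.1 y hy
      have hα := pα1 i x.1 y hy
      refine ⟨by rw [hw]; abel, ?_, ?_⟩ <;>
        simp only [hw, hadd, hα, he, hp] <;> omega
    · rw [Option.map_eq_some_iff] at h
      obtain ⟨y, hy, rfl⟩ := h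
      obtain ⟨hw, he, hp⟩ := h2e i x.2 y hy
      have hα := pα2 i x.2 y hy
      refine ⟨by rw [hw]; abel, ?_, ?_⟩ <;>
        simp only [hw, hadd, hα, he, hp] <;> omega
  · intro i x b' h
    simp only [CrystalData.tensor] at h ⊢
    have t1 := h1p i x.1
    have t2 := h2p i x.2
    split_ifs at h with hc
    · rw [Option.map_eq_some_iff] at h
      obtain ⟨y, hy, rfl⟩ := h
      obtain ⟨hw, he, hp⟩ := h1f i x.1 y hy
      have hα := pα1 i y x.1 ((h1ef i x.1 y).mp hy)
      refine ⟨by rw [hw]; abel, ?_, ?_⟩ <;>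
        simp only [hw, hadd, hα, he, hp, sub_eq_add_neg, hneg] <;> omega
    · rw [Option.map_eq_some_iff] at h
      obtain ⟨y, hy, rfl⟩ := h
      obtain ⟨hw, he, hp⟩ := h2f i x.2 y hy
      have hα := pα2 i y x.2 ((h2ef i x.2 y).mp hy)
      refine ⟨by rw [hw]; abel, ?_, ?_⟩ <;>
        simp only [hw, hadd, hα, he, hp, sub_eq_add_neg, hneg] <;> omega
  · intro i x y
    constructor
    · intro h
      simp only [CrystalData.tensor] at h ⊢
      split_ifs at h with hc
      · rw [Option.map_eq_some_iff] at h
        obtain ⟨z, hz, rfl⟩ := h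
        obtain ⟨-, -, hp⟩ := h1f i x.1 z hz
        dsimp only
        rw [if_pos (by omega), (h1ef i x.1 z).mp hz]
        simp
      · rw [Option.map_eq_some_iff] at h
        obtain ⟨z, hz, rfl⟩ := h
        obtain ⟨-, he, -⟩ := h2f i x.2 z hz
        dsimp only
        rw [if_neg (by omega), (h2ef i x.2 z).mp hz]
        simp
    · intro h
      simp only [CrystalData.tensor] at h ⊢
      split_ifs at h with hc
      · rw [Option.map_eq_some_iff] at h
        obtain ⟨z, hz, rfl⟩ := h
        obtain ⟨-, -, hp⟩ := h1e i y.1 z hz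
        dsimp only
        rw [if_pos (by omega), (h1ef i z y.1).mpr hz]
        simp
      · rw [Option.map_eq_some_iff] at h
        obtain ⟨z, hz, rfl⟩ := h
        obtain ⟨-, he, -⟩ := h2e i y.2 z hz
        dsimp only
        rw [if_neg (by omega), (h2ef i z y.2).mpr hz]
        simp
end

section
/- Let Y be a reduced proper Young wall (for one of the classical quantum affine algebra types) and i an index. If ẽ_i Y ≠ 0 then ẽ_i Y is again a reduced proper Young wall, and if f̃_i Y ≠ 0 then f̃_i Y is again a reduced proper Young wall. Hence the set 𝒴(λ) of reduced proper Young walls on the ground-state wall Y_λ is stable under all Kashiwara operators. -/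
/-- Cancel all adjacent `(+,−)`-pairs in a word of signs (`true` = `+`, `false` = `−`),
tagged by the index of the column contributing the sign. The first list is a stack (in
reverse order) of the already-processed, reduced prefix. -/
def reduceSigns : List (ℕ × Bool) → List (ℕ × Bool) → List (ℕ × Bool)
  | acc, [] => acc.reverse
  | [], x :: rest => reduceSigns [x] rest
  | y :: acc, x :: rest =>
      if y.2 = true ∧ x.2 = false then reduceSigns acc rest
      else reduceSigns (x :: y :: acc) rest

/-- The color of the block in column `k` (counted from the right, starting at `0`) and
row `r` (from the bottom, starting at `0`) in the `A_n^{(1)}` stacking pattern on the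
ground-state wall `Y_{Λ_m}`: colors increase by `1` going up and decrease by `1` going
left. -/
def wallColor (n : ℕ) (m : ZMod (n + 1)) (k r : ℕ) : ZMod (n + 1) :=
  m + (r : ZMod (n + 1)) - (k : ZMod (n + 1))

/-- A Young wall of type `A_n^{(1)}`, recorded by its column heights: the heights weakly
decrease from right to left, and only finitely many blocks have been added to the
ground-state wall. (For type `A_n^{(1)}` every Young wall is proper.) -/
def IsWall (h : ℕ → ℕ) : Prop :=
  (∀ k, h (k + 1) ≤ h k) ∧ ∃ K, h K = 0

/-- A proper Young wall of type `A_n^{(1)}` is reduced iff no column contains a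
removable `δ`-column (`n+1` consecutive blocks, one of each color): removing `n+1`
blocks from the top of any column must break the Young wall condition. -/
def ReducedWall (n : ℕ) (h : ℕ → ℕ) : Prop := ∀ k, h k ≤ h (k + 1) + n

/-- The sign contributed by column `k` to the `i`-signature: `some false` (a `−`) if the
top of the column is a removable `i`-block, `some true` (a `+`) if the top of the column
is an `i`-admissible slot, and `none` otherwise. -/
def wallSign (n : ℕ) (m i : ZMod (n + 1)) (h : ℕ → ℕ) (k : ℕ) : Option Bool :=
  if 1 ≤ h k ∧ wallColor n m k (h k - 1) = i ∧ h (k + 1) < h k then some false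
  else if wallColor n m k (h k) = i ∧ (k = 0 ∨ h k + 1 ≤ h (k - 1)) then some true
  else none

-- The reduced `i`-signature of a Young wall: the signs of the columns, read from left
-- (large `k`) to right (column `0`), with all `(+,−)`-pairs cancelled.
open Classical in
noncomputable def wallWord (n : ℕ) (m i : ZMod (n + 1)) (h : ℕ → ℕ) : List (ℕ × Bool) :=
  if hz : ∃ K, h K = 0 then
    reduceSigns []
      (((List.range (Nat.find hz + 1)).reverse).filterMap
        (fun k => (wallSign n m i h k).map (fun s => (k, s))))
  else []

/-- Kashiwara operator `ẽ_i` on Young walls: remove the `i`-block at the column carrying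
the rightmost `−` in the reduced `i`-signature (`none` if there is no `−`). -/
noncomputable def wallE (n : ℕ) (m i : ZMod (n + 1)) (h : ℕ → ℕ) : Option (ℕ → ℕ) :=
  match (wallWord n m i h).reverse.find? (fun x => !x.2) with
  | some (k, _) => some (Function.update h k (h k - 1))
  | none => none

/-- Kashiwara operator `f̃_i` on Young walls: add an `i`-block at the column carrying
the leftmost `+` in the reduced `i`-signature (`none` if there is no `+`). -/
noncomputable def wallF (n : ℕ) (m i : ZMod (n + 1)) (h : ℕ → ℕ) : Option (ℕ → ℕ) :=
  match (wallWord n m i h).find? (fun x => x.2) with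
  | some (k, _) => some (Function.update h k (h k + 1))
  | none => none

section AuxLemmas

lemma reduceSigns_nil (acc : List (ℕ × Bool)) : reduceSigns acc [] = acc.reverse := by
  cases acc <;> rfl

lemma reduceSigns_cons (y x : ℕ × Bool) (acc rest : List (ℕ × Bool)) :
    reduceSigns (y :: acc) (x :: rest) =
      if y.2 = true ∧ x.2 = false then reduceSigns acc rest
      else reduceSigns (x :: y :: acc) rest := rfl

lemma mem_reduceSigns : ∀ (l acc : List (ℕ × Bool)) (x : ℕ × Bool),
    x ∈ reduceSigns acc l → x ∈ acc ∨ x ∈ l := by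
  intro l
  induction l with
  | nil => intro acc x hx; rw [reduceSigns_nil] at hx; exact Or.inl (List.mem_reverse.mp hx)
  | cons a rest ih =>
    intro acc x hx
    match acc with
    | [] =>
      rcases ih [a] x hx with h1 | h1
      · simp at h1; simp [h1]
      · simp [h1]
    | y :: t =>
      rw [reduceSigns_cons] at hx
      split_ifs at hx with hc
      · rcases ih t x hx with h1 | h1
        · exact Or.inl (List.mem_cons_of_mem _ h1)
        · exact Or.inr (List.mem_cons_of_mem _ h1)
      · rcases ih _ x hx with h1 | h1
        · simp at h1
          rcases h1 with h | h | h
          · simp [h]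
          · simp [h]
          · simp [h]
        · simp [h1]

lemma reduceSigns_reach : ∀ (l1 acc l2 : List (ℕ × Bool)),
    ∃ acc', reduceSigns acc (l1 ++ l2) = reduceSigns acc' l2 ∧
      ∀ x ∈ acc', x ∈ acc ∨ x ∈ l1 := by
  intro l1
  induction l1 with
  | nil => intro acc l2; exact ⟨acc, rfl, fun x hx => Or.inl hx⟩
  | cons a t ih =>
    intro acc l2
    match acc with
    | [] =>
      obtain ⟨acc', h1, h2⟩ := ih [a] l2
      refine ⟨acc', h1, fun x hx => ?_⟩
      rcases h2 x hx with hh | hh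
      · simp at hh; simp [hh]
      · simp [hh]
    | y :: s =>
      rw [show ((a :: t) ++ l2) = a :: (t ++ l2) from rfl, reduceSigns_cons]
      split_ifs with hc
      · obtain ⟨acc', h1, h2⟩ := ih s l2
        refine ⟨acc', h1, fun x hx => ?_⟩
        rcases h2 x hx with hh | hh
        · exact Or.inl (List.mem_cons_of_mem _ hh)
        · exact Or.inr (List.mem_cons_of_mem _ hh)
      · obtain ⟨acc', h1, h2⟩ := ih (a :: y :: s) l2
        refine ⟨acc', h1, fun x hx => ?_⟩
        rcases h2 x hx with hh | hh
        · simp at hh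
          rcases hh with h | h | h
          · simp [h]
          · simp [h]
          · simp [h]
        · simp [hh]

lemma reduceSigns_false_stack (x : ℕ × Bool) (hx : x.2 = false) :
    ∀ (l acc1 acc2 : List (ℕ × Bool)),
      reduceSigns (acc1 ++ x :: acc2) l = (x :: acc2).reverse ++ reduceSigns acc1 l := by
  intro l
  induction l with
  | nil => intro acc1 acc2; rw [reduceSigns_nil, reduceSigns_nil]; simp
  | cons a rest ih =>
    intro acc1 acc2
    match acc1 with
    | [] =>
      rw [List.nil_append, reduceSigns_cons, if_neg (by simp [hx])]
      exact ih [a] acc2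
    | y :: t =>
      rw [show ((y :: t) ++ x :: acc2) = y :: (t ++ x :: acc2) from rfl,
        reduceSigns_cons, reduceSigns_cons]
      split_ifs with hc
      · exact ih t acc2
      · exact ih (a :: y :: t) acc2

lemma reduceSigns_mem_stack (a : ℕ × Bool) :
    ∀ (l acc2 : List (ℕ × Bool)), a ∉ acc2 → a ∉ l → ∀ acc1,
      a ∈ reduceSigns (acc1 ++ a :: acc2) l →
      ∃ w, reduceSigns (acc1 ++ a :: acc2) l = (a :: acc2).reverse ++ w := by
  intro l
  induction l with
  | nil =>
    intro acc2 _ _ acc1 _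
    exact ⟨acc1.reverse, by rw [reduceSigns_nil]; simp⟩
  | cons b rest ih =>
    intro acc2 ha2 hal acc1 hmem
    have hal' : a ∉ rest := fun hh => hal (List.mem_cons_of_mem _ hh)
    match acc1 with
    | [] =>
      rw [List.nil_append] at hmem ⊢
      rw [reduceSigns_cons] at hmem ⊢
      split_ifs at hmem ⊢ with hc
      · rcases mem_reduceSigns _ _ _ hmem with hh | hh
        · exact absurd hh ha2
        · exact absurd hh hal'
      · exact ih acc2 ha2 hal' [b] hmem
    | y :: t =>
      rw [show ((y :: t) ++ a :: acc2) = y :: (t ++ a :: acc2) from rfl,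
        reduceSigns_cons] at hmem ⊢
      split_ifs at hmem ⊢ with hc
      · exact ih acc2 ha2 hal' t hmem
      · exact ih acc2 ha2 hal' (b :: y :: t) hmem

lemma wallSign_false' {n : ℕ} {m i : ZMod (n+1)} {h : ℕ → ℕ} {k : ℕ}
    (hs : wallSign n m i h k = some false) :
    1 ≤ h k ∧ wallColor n m k (h k - 1) = i ∧ h (k + 1) < h k := by
  unfold wallSign at hs
  split_ifs at hs with h1 h2 <;> simp_all

lemma wallSign_true' {n : ℕ} {m i : ZMod (n+1)} {h : ℕ → ℕ} {k : ℕ}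
    (hs : wallSign n m i h k = some true) :
    wallColor n m k (h k) = i ∧ (k = 0 ∨ h k + 1 ≤ h (k - 1)) := by
  unfold wallSign at hs
  split_ifs at hs with h1 h2 <;> simp_all

lemma natCast_n_eq_neg_one (n : ℕ) : ((n : ℕ) : ZMod (n+1)) = -1 := by
  have := ZMod.natCast_self (n+1)
  push_cast at this
  linear_combination this

lemma range_split (c K : ℕ) (hc : c + 1 ≤ K) :
    (List.range (K+1)).reverse =
      (List.range' (c+2) (K-(c+1))).reverse ++ [c+1, c] ++ (List.range c).reverse := by
  have h1 := List.range'_append (s := 0) (m := c+2) (n := K-(c+1)) (step := 1)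
  rw [show 0 + 1*(c+2) = c+2 by ring, show (c+2) + (K-(c+1)) = K+1 by omega] at h1
  have h2 : List.range (c+2) = List.range c ++ [c, c+1] := by
    rw [List.range_succ, List.range_succ]; simp
  rw [List.range_eq_range', ← h1, ← List.range_eq_range', h2]
  simp

end AuxLemmas

/-- for the quantum affine algebra of type `A_n^{(1)}`: if `Y` is a
reduced proper Young wall and `ẽ_i Y ≠ 0` (resp. `f̃_i Y ≠ 0`) then `ẽ_i Y`
(resp. `f̃_i Y`) is again a reduced proper Young wall; hence the set `𝒴(λ)` of reduced
proper Young walls is stable under all Kashiwara operators. -/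
theorem reduced_walls_stable_under_kashiwara (n : ℕ) (hn : 1 ≤ n)
    (m : ZMod (n + 1)) (i : ZMod (n + 1)) (h : ℕ → ℕ)
    (hw : IsWall h) (hr : ReducedWall n h) :
    (∀ h', wallE n m i h = some h' → IsWall h' ∧ ReducedWall n h') ∧
    (∀ h', wallF n m i h = some h' → IsWall h' ∧ ReducedWall n h') := by
  obtain ⟨hmono, hz⟩ := hw
  haveI : Fact (1 < n + 1) := ⟨by omega⟩
  have hanti : ∀ a b : ℕ, a ≤ b → h b ≤ h a := by
    intro a b hab
    induction b, hab using Nat.le_induction with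
    | base => exact le_rfl
    | succ b hb ih => exact le_trans (hmono b) ih
  have hn1 := natCast_n_eq_neg_one n
  obtain ⟨K, hK, hword⟩ : ∃ K : ℕ, h K = 0 ∧ wallWord n m i h = reduceSigns []
      (((List.range (K + 1)).reverse).filterMap
        (fun k => (wallSign n m i h k).map (fun s => (k, s)))) := by
    refine ⟨Nat.find hz, Nat.find_spec hz, ?_⟩
    rw [wallWord, dif_pos hz]
  have hmemL : ∀ (p : ℕ × Bool) (lst : List ℕ),
      p ∈ lst.filterMap (fun k => (wallSign n m i h k).map (fun s => (k, s))) ↔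
        p.1 ∈ lst ∧ wallSign n m i h p.1 = some p.2 := by
    rintro ⟨a, b⟩ lst
    simp only [List.mem_filterMap, Option.map_eq_some_iff]
    constructor
    · rintro ⟨c, hc, s, hs, heq⟩
      cases heq
      exact ⟨hc, hs⟩
    · rintro ⟨ha, hb⟩
      exact ⟨a, ha, b, hb, rfl⟩
  constructor
  · -- the ẽ_i case
    intro h' he
    unfold wallE at he
    rcases hfind : (wallWord n m i h).reverse.find? (fun x => !x.2) with _ | ⟨k, s⟩ <;>
      rw [hfind] at he
    · simp at he
    simp only [Option.some.injEq] at he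
    subst he
    have hsfalse : s = false := by simpa using List.find?_some hfind
    subst hsfalse
    have hmemw : (k, false) ∈ wallWord n m i h :=
      List.mem_reverse.mp (List.mem_of_find?_eq_some hfind)
    have hmemw' : ((k, false) : ℕ × Bool) ∈ reduceSigns []
        (((List.range (K + 1)).reverse).filterMap
          (fun c => (wallSign n m i h c).map (fun s => (c, s)))) := by
      rw [← hword]; exact hmemw
    have hkL : k ∈ (List.range (K+1)).reverse ∧ wallSign n m i h k = some false := by
      rcases mem_reduceSigns _ _ _ hmemw' with hc | hc
      · simp at hc
      · exact (hmemL _ _).mp hc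
    obtain ⟨hkK, hks⟩ := hkL
    have hkK' : k ≤ K := by
      rw [List.mem_reverse, List.mem_range] at hkK; omega
    obtain ⟨hk1, hkcol, hkstep⟩ := wallSign_false' hks
    have h'def : ∀ j, Function.update h k (h k - 1) j = if j = k then h k - 1 else h j := by
      intro j; simp [Function.update_apply]
    refine ⟨⟨?_, ?_⟩, ?_⟩
    · -- monotone
      intro j
      simp only [h'def]
      split_ifs with c1 c2 c2
      · omega
      · subst c1
        have := hmono j; omega
      · subst c2
        omega
      · exact hmono j
    · exact ⟨K, by rw [h'def, if_neg (by rintro rfl; omega)]; exact hK⟩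
    · -- reduced
      intro j
      simp only [h'def]
      split_ifs with c1 c2 c2
      · omega
      · -- c1 : j = k
        subst c1
        have := hr j; omega
      · -- c2 : j + 1 = k : the hard case
        subst c2
        by_contra hcon'
        have hcon : h j = h (j+1) + n := by have := hr j; omega
        -- column j also carries a `−`
        have hjs : wallSign n m i h j = some false := by
          rw [wallSign, if_pos]
          refine ⟨by omega, ?_, by omega⟩
          unfold wallColor at hkcol ⊢
          obtain ⟨a, ha⟩ : ∃ a, h (j+1) = a + 1 := ⟨h (j+1) - 1, by omega⟩
          rw [show h j - 1 = a + n by omega]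
          rw [show h (j+1) - 1 = a by omega] at hkcol
          push_cast at hkcol ⊢
          linear_combination hkcol + hn1
        have hLsplit : ((List.range (K+1)).reverse).filterMap
            (fun c => (wallSign n m i h c).map (fun s => (c, s))) =
            ((List.range' (j+2) (K-(j+1))).reverse).filterMap
              (fun c => (wallSign n m i h c).map (fun s => (c, s))) ++
            (j+1, false) :: (j, false) ::
            ((List.range j).reverse).filterMap
              (fun c => (wallSign n m i h c).map (fun s => (c, s))) := by
          rw [range_split j K (by omega), List.filterMap_append, List.filterMap_append]
          simp [hks, hjs]
        set l1 := ((List.range' (j+2) (K-(j+1))).reverse).filterMap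
            (fun c => (wallSign n m i h c).map (fun s => (c, s))) with hl1def
        set l2 := ((List.range j).reverse).filterMap
            (fun c => (wallSign n m i h c).map (fun s => (c, s))) with hl2def
        have hl1k : ∀ p ∈ l1, j + 2 ≤ p.1 := by
          intro p hp
          obtain ⟨hp1, -⟩ := (hmemL p _).mp hp
          rw [List.mem_reverse, List.mem_range'] at hp1
          omega
        have hl2k : ∀ p ∈ l2, p.1 < j := by
          intro p hp
          obtain ⟨hp1, -⟩ := (hmemL p _).mp hp
          rw [List.mem_reverse, List.mem_range] at hp1
          omega
        obtain ⟨A, hA, hAsub⟩ := reduceSigns_reach l1 [] ((j+1, false) :: (j, false) :: l2)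
        have hAk : ∀ p ∈ A, j + 2 ≤ p.1 := by
          intro p hp
          rcases hAsub p hp with hh | hh
          · simp at hh
          · exact hl1k p hh
        have hWA : wallWord n m i h = reduceSigns A ((j+1, false) :: (j, false) :: l2) := by
          rw [hword, hLsplit]; exact hA
        have hstep : wallWord n m i h =
            reduceSigns ((j, false) :: (j+1, false) :: A) l2 := by
          rcases A with _ | ⟨y, t⟩
          · rw [hWA,
              show reduceSigns [] ((j+1, false) :: (j, false) :: l2)
                = reduceSigns [(j+1, false)] ((j, false) :: l2) from rfl,
              reduceSigns_cons, if_neg (by simp)]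
          · by_cases hy : y.2 = true
            · exfalso
              rw [hWA, reduceSigns_cons, if_pos ⟨hy, rfl⟩] at hmemw
              rcases mem_reduceSigns _ _ _ hmemw with hh | hh
              · have := hAk _ (List.mem_cons_of_mem _ hh); simp at this
              · rcases List.mem_cons.mp hh with hh1 | hh1
                · simp at hh1
                · have := hl2k _ hh1; simp at this
            · rw [hWA, reduceSigns_cons, if_neg (by simp [hy]),
                reduceSigns_cons, if_neg (by simp)]
        have hfin := reduceSigns_false_stack (j, false) rfl l2 [] ((j+1, false) :: A)
        rw [List.nil_append] at hfin
        have hW2 : (wallWord n m i h).reverse =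
            (reduceSigns [] l2).reverse ++ (j, false) :: (j+1, false) :: A := by
          rw [hstep, hfin]; simp
        rw [hW2, List.find?_append] at hfind
        rcases hfound : List.find? (fun x => !x.2) (reduceSigns [] l2).reverse
          with _ | y <;> rw [hfound] at hfind
        · simp only [Option.none_or] at hfind
          rw [List.find?_cons_of_pos (p := fun x => !x.2) (a := (j, false)) (by simp)] at hfind
          simp at hfind
        · rw [Option.or] at hfind
          simp only [Option.some.injEq] at hfind
          subst hfind
          have hy2 := List.mem_reverse.mp (List.mem_of_find?_eq_some hfound)
          rcases mem_reduceSigns _ _ _ hy2 with hh | hh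
          · simp at hh
          · have := hl2k _ hh; simp at this
      · exact hr j
  · -- the f̃_i case
    intro h' he
    unfold wallF at he
    rcases hfind : (wallWord n m i h).find? (fun x => x.2) with _ | ⟨k, s⟩ <;>
      rw [hfind] at he
    · simp at he
    simp only [Option.some.injEq] at he
    subst he
    have hstrue : s = true := by simpa using List.find?_some hfind
    subst hstrue
    have hmemw : (k, true) ∈ wallWord n m i h := List.mem_of_find?_eq_some hfind
    have hmemw' : ((k, true) : ℕ × Bool) ∈ reduceSigns []
        (((List.range (K + 1)).reverse).filterMap
          (fun c => (wallSign n m i h c).map (fun s => (c, s)))) := by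
      rw [← hword]; exact hmemw
    have hkL : k ∈ (List.range (K+1)).reverse ∧ wallSign n m i h k = some true := by
      rcases mem_reduceSigns _ _ _ hmemw' with hc | hc
      · simp at hc
      · exact (hmemL _ _).mp hc
    obtain ⟨hkK, hks⟩ := hkL
    have hkK' : k ≤ K := by
      rw [List.mem_reverse, List.mem_range] at hkK; omega
    obtain ⟨hkcol, hkedge⟩ := wallSign_true' hks
    have h'def : ∀ j, Function.update h k (h k + 1) j = if j = k then h k + 1 else h j := by
      intro j; simp [Function.update_apply]
    refine ⟨⟨?_, ?_⟩, ?_⟩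
    · -- monotone
      intro j
      simp only [h'def]
      split_ifs with c1 c2 c2
      · omega
      · -- c1 : j + 1 = k; need h k + 1 ≤ h j
        subst c1
        rcases hkedge with h0 | hle
        · omega
        · simpa using hle
      · subst c2
        have := hmono j; omega
      · exact hmono j
    · by_cases hKk : K = k
      · refine ⟨K + 1, ?_⟩
        rw [h'def, if_neg (by omega)]
        have := hmono K; omega
      · exact ⟨K, by rw [h'def, if_neg hKk]; exact hK⟩
    · -- reduced
      intro j
      simp only [h'def]
      split_ifs with c1 c2 c2
      · omega
      · -- c1 : j = k : the hard case
        subst c1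
        by_contra hcon'
        have hcon : h j = h (j+1) + n := by have := hr j; omega
        have hj1K : j + 1 ≤ K := by
          rcases Nat.lt_or_ge j K with hh | hh
          · omega
          · have := hanti K j hh; omega
        have hcast : ((h j : ℕ) : ZMod (n+1)) = ((h (j+1) : ℕ) : ZMod (n+1)) + n := by
          rw [hcon]; push_cast; ring
        have hsig1 : wallSign n m i h (j+1) = some true := by
          rw [wallSign, if_neg, if_pos]
          · refine ⟨?_, Or.inr ?_⟩
            · unfold wallColor at hkcol ⊢
              push_cast at hkcol ⊢
              linear_combination hkcol - hcast - hn1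
            · simp only [Nat.add_sub_cancel]
              omega
          · rintro ⟨h1, h2, -⟩
            unfold wallColor at hkcol h2
            rw [Nat.cast_sub h1, Nat.cast_one] at h2
            push_cast at hkcol h2
            have hone : (1 : ZMod (n+1)) = 0 := by
              linear_combination hkcol - h2 - hcast - hn1
            exact one_ne_zero hone
        have hLsplit : ((List.range (K+1)).reverse).filterMap
            (fun c => (wallSign n m i h c).map (fun s => (c, s))) =
            ((List.range' (j+2) (K-(j+1))).reverse).filterMap
              (fun c => (wallSign n m i h c).map (fun s => (c, s))) ++
            (j+1, true) :: (j, true) ::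
            ((List.range j).reverse).filterMap
              (fun c => (wallSign n m i h c).map (fun s => (c, s))) := by
          rw [range_split j K (by omega), List.filterMap_append, List.filterMap_append]
          simp [hks, hsig1]
        set l1 := ((List.range' (j+2) (K-(j+1))).reverse).filterMap
            (fun c => (wallSign n m i h c).map (fun s => (c, s))) with hl1def
        set l2 := ((List.range j).reverse).filterMap
            (fun c => (wallSign n m i h c).map (fun s => (c, s))) with hl2def
        have hl1k : ∀ p ∈ l1, j + 2 ≤ p.1 := by
          intro p hp
          obtain ⟨hp1, -⟩ := (hmemL p _).mp hp
          rw [List.mem_reverse, List.mem_range'] at hp1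
          omega
        have hl2k : ∀ p ∈ l2, p.1 < j := by
          intro p hp
          obtain ⟨hp1, -⟩ := (hmemL p _).mp hp
          rw [List.mem_reverse, List.mem_range] at hp1
          omega
        obtain ⟨A, hA, hAsub⟩ := reduceSigns_reach l1 [] ((j+1, true) :: (j, true) :: l2)
        have hAk : ∀ p ∈ A, j + 2 ≤ p.1 := by
          intro p hp
          rcases hAsub p hp with hh | hh
          · simp at hh
          · exact hl1k p hh
        have hWA : wallWord n m i h = reduceSigns A ((j+1, true) :: (j, true) :: l2) := by
          rw [hword, hLsplit]; exact hA
        have hstep : wallWord n m i h =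
            reduceSigns ((j, true) :: (j+1, true) :: A) l2 := by
          rcases A with _ | ⟨y, t⟩
          · rw [hWA,
              show reduceSigns [] ((j+1, true) :: (j, true) :: l2)
                = reduceSigns [(j+1, true)] ((j, true) :: l2) from rfl,
              reduceSigns_cons, if_neg (by simp)]
          · rw [hWA, reduceSigns_cons, if_neg (by simp),
              reduceSigns_cons, if_neg (by simp)]
        have hnmem2 : ((j, true) : ℕ × Bool) ∉ (j+1, true) :: A := by
          intro hh
          rcases List.mem_cons.mp hh with hh1 | hh1
          · simp at hh1
          · have := hAk _ hh1; simp at this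
        have hnmeml2 : ((j, true) : ℕ × Bool) ∉ l2 := by
          intro hh
          have := hl2k _ hh; simp at this
        obtain ⟨w, hwre⟩ := reduceSigns_mem_stack (j, true) l2 ((j+1, true) :: A)
          hnmem2 hnmeml2 [] (by rw [List.nil_append, ← hstep]; exact hmemw)
        rw [List.nil_append] at hwre
        have hW2 : wallWord n m i h = A.reverse ++ (j+1, true) :: (j, true) :: w := by
          rw [hstep, hwre]; simp
        rw [hW2, List.find?_append] at hfind
        rcases hfound : List.find? (fun x => x.2) A.reverse
          with _ | y <;> rw [hfound] at hfind
        · simp only [Option.none_or] at hfind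
          rw [List.find?_cons_of_pos (p := fun x => x.2) (a := (j+1, true)) (by simp)] at hfind
          simp at hfind
        · rw [Option.or] at hfind
          simp only [Option.some.injEq] at hfind
          subst hfind
          have hy2 := List.mem_reverse.mp (List.mem_of_find?_eq_some hfound)
          have := hAk _ hy2; simp at this
      · -- c2 : j + 1 = k
        subst c2
        have := hr j; omega
      · exact hr j
end
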